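/- arXiv:1804.00728 — 3 statements merged into one kernel-verified Lean document; each statement's English description precedes it below -/
import Mathlib

section
/- Let G be a torsion group. Then RP*(G) is triangle-free if and only if Ω(n) ≤ 2 for every element order n of G; and RP(G) is triangle-free if and only if every non-identity element of G has prime order. -/
open SimpleGraph

/-- The reduced power graph of a group. -/
def redPowGraph (G : Type*) [Group G] : SimpleGraph G where
  Adj u v := Subgroup.zpowers u < Subgroup.zpowers v ∨ Subgroup.zpowers v < Subgroup.zpowers u
  symm := ⟨fun u v h => h.symm⟩
  loopless := ⟨fun u h => by cases h <;> simp_all⟩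

/-- The proper reduced power graph: induced subgraph on the non-identity elements. -/
def properRedPowGraph (G : Type*) [Group G] : SimpleGraph {x : G // x ≠ 1} :=
  SimpleGraph.comap Subtype.val (redPowGraph G)

/-- Ω(n): number of prime factors counted with multiplicity. -/
def bigOmega (n : ℕ) : ℕ := n.primeFactorsList.length

/-! Three pairwise comparable elements of a preorder form a chain, so a triangle of `RP(G)` is
a chain `⟨a⟩ < ⟨b⟩ < ⟨c⟩` of cyclic subgroups. For elements of finite order, a proper inclusion
`⟨a⟩ < ⟨b⟩` makes `orderOf a` a proper divisor of `orderOf b`, so `Ω (orderOf ·)` strictly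
increases along a chain; conversely, passing from `x` to `x ^ p` for a prime `p ∣ orderOf x`
descends one step and lowers `Ω` by exactly one. Hence chains of length two exist iff some order
has `Ω ≥ 2`, and chains of length two starting at a non-identity element exist iff some order
has `Ω ≥ 3`. -/

open ArithmeticFunction Subgroup
open scoped ArithmeticFunction.Omega

lemma bigOmega_eq_cardFactors (n : ℕ) : bigOmega n = Ω n :=
  cardFactors_apply.symm

theorem SimpleGraph.cliqueFree_three_iff_of_adj_iff_lt {V α : Type*} [Preorder α]
    {H : SimpleGraph V} {f : V → α} (hadj : ∀ u v, H.Adj u v ↔ f u < f v ∨ f v < f u) :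
    H.CliqueFree 3 ↔ ∀ a b c, ¬ (f a < f b ∧ f b < f c) := by
  classical
  constructor
  · rintro hfree a b c ⟨hab, hbc⟩
    exact hfree {a, b, c} (is3Clique_triple_iff.mpr
      ⟨(hadj a b).2 (.inl hab), (hadj a c).2 (.inl (hab.trans hbc)), (hadj b c).2 (.inl hbc)⟩)
  · rintro hchain s hs
    obtain ⟨a, b, c, hab, hac, hbc, -⟩ := is3Clique_iff.mp hs
    rw [hadj] at hab hac hbc
    -- every orientation of a triangle by a strict order contains a directed path of length two
    grind

section ZPowersChain

variable {G : Type*} [Group G]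

lemma ne_one_of_zpowers_lt {a b : G} (h : zpowers a < zpowers b) : b ≠ 1 := by
  rintro rfl
  simp [zpowers_one_eq_bot] at h

theorem redPowGraph_cliqueFree_three_iff :
    (redPowGraph G).CliqueFree 3 ↔ ¬ ∃ a b c : G, zpowers a < zpowers b ∧ zpowers b < zpowers c := by
  rw [cliqueFree_three_iff_of_adj_iff_lt (f := zpowers) fun _ _ => Iff.rfl]
  simp only [not_exists]

theorem properRedPowGraph_cliqueFree_three_iff :
    (properRedPowGraph G).CliqueFree 3 ↔
      ¬ ∃ a b c : G, a ≠ 1 ∧ zpowers a < zpowers b ∧ zpowers b < zpowers c := by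
  rw [cliqueFree_three_iff_of_adj_iff_lt (f := fun u : {x : G // x ≠ 1} => zpowers u.val)
    fun _ _ => Iff.rfl]
  constructor
  · rintro hchain ⟨a, b, c, ha, hab, hbc⟩
    exact hchain ⟨a, ha⟩ ⟨b, ne_one_of_zpowers_lt hab⟩ ⟨c, ne_one_of_zpowers_lt hbc⟩ ⟨hab, hbc⟩
  · rintro hchain ⟨a, ha⟩ b c hchain'
    exact hchain ⟨a, b, c, ha, hchain'⟩

lemma IsOfFinOrder.cardFactors_orderOf_pos_iff {x : G} (hx : IsOfFinOrder x) :
    0 < Ω (orderOf x) ↔ x ≠ 1 := by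
  rw [cardFactors_pos_iff_one_lt, Ne, ← orderOf_eq_one_iff]
  have := hx.orderOf_pos
  omega

lemma IsOfFinOrder.cardFactors_orderOf_le_one_iff {x : G} (hx : IsOfFinOrder x) :
    Ω (orderOf x) ≤ 1 ↔ (x ≠ 1 → (orderOf x).Prime) := by
  rw [← cardFactors_eq_one_iff_prime, ← hx.cardFactors_orderOf_pos_iff]
  omega

lemma cardFactors_orderOf_lt_of_zpowers_lt {a b : G} (hb : IsOfFinOrder b)
    (h : zpowers a < zpowers b) : Ω (orderOf a) < Ω (orderOf b) := by
  obtain ⟨k, hk⟩ := orderOf_dvd_of_mem_zpowers (h.le (mem_zpowers a))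
  have hb0 := hb.orderOf_pos
  have hk1 : k ≠ 1 := by
    rintro rfl
    have : Finite (zpowers b) := hb.finite_zpowers.to_subtype
    refine h.ne (eq_of_le_of_card_ge h.le ?_)
    rw [Nat.card_zpowers, Nat.card_zpowers, hk, mul_one]
  have hk0 : k ≠ 0 := by rintro rfl; omega
  rw [hk, cardFactors_mul (by rintro h0; rw [h0, zero_mul] at hk; omega) hk0]
  have := cardFactors_pos_iff_one_lt.mpr (by omega : 1 < k)
  omega

lemma IsOfFinOrder.exists_zpowers_lt_cardFactors_orderOf {x : G} (hx : IsOfFinOrder x)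
    (h1 : x ≠ 1) : ∃ y, zpowers y < zpowers x ∧ Ω (orderOf y) + 1 = Ω (orderOf x) := by
  set p := (orderOf x).minFac
  have hp : p.Prime := Nat.minFac_prime (mt orderOf_eq_one_iff.mp h1)
  have hpx : orderOf x = p * orderOf (x ^ p) := by
    rw [hx.orderOf_pow, Nat.gcd_eq_right (Nat.minFac_dvd _),
      Nat.mul_div_cancel' (Nat.minFac_dvd _)]
  have hΩ : Ω (orderOf (x ^ p)) + 1 = Ω (orderOf x) := by
    have := hx.orderOf_pos
    rw [hpx, cardFactors_mul hp.ne_zero (by rintro h0; rw [h0, mul_zero] at hpx; omega),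
      cardFactors_apply_prime hp, add_comm]
  refine ⟨x ^ p, lt_of_le_of_ne (zpowers_le.mpr (pow_mem (mem_zpowers x) p)) fun he => ?_, hΩ⟩
  rw [← Nat.card_zpowers, he, Nat.card_zpowers] at hΩ
  omega

theorem exists_zpowers_lt_lt_iff (hT : ∀ x : G, IsOfFinOrder x) (k : ℕ) :
    (∃ a b c : G, k ≤ Ω (orderOf a) ∧ zpowers a < zpowers b ∧ zpowers b < zpowers c) ↔
      ∃ c : G, k + 2 ≤ Ω (orderOf c) := by
  constructor
  · rintro ⟨a, b, c, ha, hab, hbc⟩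
    have := cardFactors_orderOf_lt_of_zpowers_lt (hT b) hab
    have := cardFactors_orderOf_lt_of_zpowers_lt (hT c) hbc
    exact ⟨c, by omega⟩
  · rintro ⟨c, hc⟩
    obtain ⟨b, hbc, hb⟩ := (hT c).exists_zpowers_lt_cardFactors_orderOf
      ((hT c).cardFactors_orderOf_pos_iff.mp (by omega))
    obtain ⟨a, hab, ha⟩ := (hT b).exists_zpowers_lt_cardFactors_orderOf
      ((hT b).cardFactors_orderOf_pos_iff.mp (by omega))
    exact ⟨a, b, c, by omega, hab, hbc⟩

end ZPowersChain

/-- For a torsion group G, RP*(G) is triangle-free iff Ω(n) ≤ 2 for every element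
order n, and RP(G) is triangle-free iff every non-identity element has prime order. -/
theorem stmt3 {G : Type*} [Group G] (hT : ∀ x : G, IsOfFinOrder x) :
    ((properRedPowGraph G).CliqueFree 3 ↔ ∀ x : G, bigOmega (orderOf x) ≤ 2) ∧
    ((redPowGraph G).CliqueFree 3 ↔ ∀ x : G, x ≠ 1 → (orderOf x).Prime) := by
  constructor
  · have hpos (x : G) : x ≠ 1 ↔ 1 ≤ Ω (orderOf x) := (hT x).cardFactors_orderOf_pos_iff.symm
    simp_rw [properRedPowGraph_cliqueFree_three_iff, hpos, exists_zpowers_lt_lt_iff hT,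
      bigOmega_eq_cardFactors, not_exists, not_le]
    exact forall_congr' fun _ => by omega
  · have hchain := exists_zpowers_lt_lt_iff hT 0
    simp only [zero_le, true_and, zero_add] at hchain
    simp_rw [redPowGraph_cliqueFree_three_iff, hchain,
      ← fun x => (hT x).cardFactors_orderOf_le_one_iff, not_exists, not_le]
    exact forall_congr' fun _ => by omega
end

section
/- Let G be a finite group and k ≥ 3. Then RP*(G) is a complete k-partite graph if and only if G is isomorphic to the cyclic group ℤ_{p^k} for some prime p. -/
open SimpleGraph

/-- A graph is complete k-partite if its vertices can be partitioned into k nonempty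
independent sets with every pair of vertices in different parts adjacent. -/
def IsCompleteKPartite {V : Type*} (Γ : SimpleGraph V) (k : ℕ) : Prop :=
  ∃ P : V → Fin k, Function.Surjective P ∧ ∀ u v, Γ.Adj u v ↔ P u ≠ P v


/-!
If `G` is not cyclic, let `⟨u⟩ ≠ ⟨v⟩` be maximal cyclic subgroups and `H = ⟨u⟩ ∩ ⟨v⟩`. The
vertices `u` and `v` are not adjacent, and every vertex outside their part is adjacent to both,
hence lies in `H`. As there are at least two further parts, `H` contains a chain
`1 < ⟨x⟩ < ⟨y⟩`, and comparing parts shows that every `g ∉ H` satisfies `⟨g ^ p⟩ = H` for a prime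
`p ∣ |H|`. So `H` is central and `G ⧸ H` is a nontrivial `p`-group. Take `z` central modulo `H`
and `a ∉ ⟨z⟩`, and write `a ^ p = z ^ (p * s)`: the commutator of `a` and `z ^ (-s)` is central of
order dividing `p`, so `w = a * z ^ (-s) ∉ H` has `w ^ (p ^ 2) = 1`, against `|⟨w ^ p⟩| = |H| > p`.

If `G` is cyclic, `⟨x⟩ ≤ ⟨y⟩` iff `orderOf x ∣ orderOf y`. Suppose primes `p ≠ q` divide `|G|`.
A vertex `x` outside the parts of a generator and of the elements of order `p` and `q` has order
a proper divisor of `|G|` divisible by `p * q`; a prime power `r ^ j ∣ |G|` not dividing it is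
incomparable both with `orderOf x` and with `p` or `q`, which would put `x` in the part of `p`. So
`|G| = p ^ a`, the parts are the orders `p, …, p ^ a`, and `a = k` since a complete multipartite
graph determines its number of parts.
-/

open Subgroup
open scoped commutatorElement

theorem IsCompleteKPartite.le {V : Type*} {Γ : SimpleGraph V} {k l : ℕ}
    (hk : IsCompleteKPartite Γ k) (hl : IsCompleteKPartite Γ l) : k ≤ l := by
  obtain ⟨P, hPs, hP⟩ := hk
  obtain ⟨Q, hQs, hQ⟩ := hl
  choose s hs using hQs
  have hsurj : Function.Surjective (P ∘ s) := by
    intro i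
    obtain ⟨v, rfl⟩ := hPs i
    refine ⟨Q v, not_not.mp fun hne => ?_⟩
    exact (hQ _ _).mp ((hP _ _).mpr hne) (hs (Q v))
  simpa using Fintype.card_le_of_surjective _ hsurj

theorem IsCompleteKPartite.unique {V : Type*} {Γ : SimpleGraph V} {k l : ℕ}
    (hk : IsCompleteKPartite Γ k) (hl : IsCompleteKPartite Γ l) : k = l :=
  (hk.le hl).antisymm (hl.le hk)

section GroupTheory

variable {G : Type*} [Group G]

theorem Subgroup.normal_of_le_center {H : Subgroup G} (h : H ≤ center G) : H.Normal :=
  ⟨fun n hn g => by rwa [mem_center_iff.mp (h hn) g, mul_inv_cancel_right]⟩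

theorem commutatorElement_pow_right {a y : G} (h : Commute ⁅a, y⁆ y) (n : ℕ) :
    ⁅a, y ^ n⁆ = ⁅a, y⁆ ^ n := by
  have hconj : a * y ^ n * a⁻¹ = ⁅a, y⁆ ^ n * y ^ n := by
    rw [← conj_pow, ← h.mul_pow, commutatorElement_def, inv_mul_cancel_right]
  rw [commutatorElement_def a (y ^ n), hconj, mul_inv_cancel_right]

theorem mul_pow_mul_inv_mem_zpowers_commutatorElement {a b : G} (hc : ⁅a, b⁆ ∈ center G)
    (n : ℕ) : (a * b) ^ n * (a ^ n * b ^ n)⁻¹ ∈ zpowers ⁅a, b⁆ := by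
  have := normal_of_le_center (zpowers_le.mpr hc)
  have hab : Commute (a : G ⧸ zpowers ⁅a, b⁆) b := by
    rw [← commutatorElement_eq_one_iff_commute, ← QuotientGroup.mk'_apply,
      ← QuotientGroup.mk'_apply, ← map_commutatorElement, QuotientGroup.mk'_apply,
      QuotientGroup.eq_one_iff]
    exact mem_zpowers _
  rw [← QuotientGroup.eq_one_iff]
  simp [hab.mul_pow]

theorem commutatorElement_mem_of_mk_mem_center {H : Subgroup G} [H.Normal] (a : G) {y : G}
    (hy : (y : G ⧸ H) ∈ center (G ⧸ H)) : ⁅a, y⁆ ∈ H := by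
  rw [← QuotientGroup.eq_one_iff, ← QuotientGroup.mk'_apply, map_commutatorElement,
    commutatorElement_eq_one_iff_commute]
  exact mem_center_iff.mp hy _

theorem pow_mem_of_forall_zpowers_pow_eq {H : Subgroup G} {p : ℕ}
    (hH : ∀ g ∉ H, zpowers (g ^ p) = H) (g : G) : g ^ p ∈ H := by
  by_cases hg : g ∈ H
  · exact pow_mem hg p
  · exact hH g hg ▸ mem_zpowers _

theorem isPGroup_quotient_of_forall_pow_mem {H : Subgroup G} [H.Normal] {p : ℕ}
    (h : ∀ g, g ^ p ∈ H) : IsPGroup p (G ⧸ H) := fun q => ⟨1, by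
  induction q using QuotientGroup.induction_on with
  | H g => rw [pow_one, ← QuotientGroup.mk_pow, QuotientGroup.eq_one_iff]; exact h g⟩

theorem le_center_of_forall_zpowers_pow_eq {H : Subgroup G} {p : ℕ}
    (hH : ∀ g ∉ H, zpowers (g ^ p) = H) (hHtop : H ≠ ⊤) : H ≤ center G := by
  obtain ⟨g₀, hg₀⟩ : ∃ g, g ∉ H := by simpa [eq_top_iff'] using hHtop
  refine fun c hc => mem_center_iff.mpr fun g => ?_
  by_cases hg : g ∈ H
  · obtain ⟨i, rfl⟩ := mem_zpowers_iff.mp (hH g₀ hg₀ ▸ hg)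
    obtain ⟨j, rfl⟩ := mem_zpowers_iff.mp (hH g₀ hg₀ ▸ hc)
    exact (Commute.zpow_zpow_self _ i j).eq
  · obtain ⟨j, rfl⟩ := mem_zpowers_iff.mp (hH g hg ▸ hc)
    exact ((Commute.refl g).pow_right p |>.zpow_right j).eq

theorem exists_notMem_mk_mem_center [Finite G] {H : Subgroup G} [H.Normal] {p : ℕ}
    [Fact p.Prime] (hp : IsPGroup p (G ⧸ H)) (hHtop : H ≠ ⊤) :
    ∃ z ∉ H, (z : G ⧸ H) ∈ center (G ⧸ H) := by
  have := QuotientGroup.nontrivial_iff.mpr hHtop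
  have := hp.center_nontrivial
  obtain ⟨⟨zq, hzq⟩, hzq1⟩ := exists_ne (1 : center (G ⧸ H))
  obtain ⟨z, rfl⟩ := QuotientGroup.mk_surjective zq
  exact ⟨z, fun h => hzq1 (Subtype.ext ((QuotientGroup.eq_one_iff z).mpr h)), hzq⟩

variable [Finite G]

theorem zpowers_pow_eq_of_forall_generates {H : Subgroup G} {p : ℕ} {g : G} (hp : p.Prime)
    (hpH : p ∣ Nat.card H) (hgH : g ∉ H) (hHg : H ≤ zpowers g)
    (hgen : ∀ x ∈ zpowers g, x ∉ H → zpowers x = zpowers g) : zpowers (g ^ p) = H := by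
  have hHn : Nat.card H ∣ orderOf g := Nat.card_zpowers g ▸ card_dvd_of_le hHg
  have hpn : p ∣ orderOf g := hpH.trans hHn
  have hord : orderOf (g ^ p) = orderOf g / p := orderOf_pow_of_dvd hp.ne_zero hpn
  have hmem : g ^ p ∈ H := by
    by_contra hnot
    have h := Nat.card_zpowers (g ^ p)
    rw [hgen _ (pow_mem (mem_zpowers g) p) hnot, Nat.card_zpowers, hord] at h
    exact (Nat.div_lt_self (orderOf_pos g) hp.one_lt).ne' h
  have hHne : Nat.card H ≠ orderOf g := fun h =>
    hgH (eq_of_le_of_card_ge hHg (by rw [Nat.card_zpowers, h]) ▸ mem_zpowers g)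
  obtain ⟨t, ht⟩ := card_dvd_of_le (zpowers_le.mpr hmem)
  rw [Nat.card_zpowers, hord] at ht
  have htp : t ∣ p := by
    refine (Nat.mul_dvd_mul_iff_left (Nat.div_pos (Nat.le_of_dvd (orderOf_pos g) hpn)
      hp.pos)).mp ?_
    rw [← ht, Nat.div_mul_cancel hpn]
    exact hHn
  refine eq_of_le_of_card_ge (zpowers_le.mpr hmem) ?_
  rw [Nat.card_zpowers, hord]
  rcases hp.eq_one_or_self_of_dvd t htp with rfl | rfl
  · rw [ht, mul_one]
  · exact absurd (by rw [ht, Nat.div_mul_cancel hpn]) hHne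

theorem isCyclic_of_forall_zpowers_pow_eq {H : Subgroup G} {p : ℕ} (hp : p.Prime)
    (hH : ∀ g ∉ H, zpowers (g ^ p) = H) (hHtop : H ≠ ⊤) (hHp : ¬ Nat.card H ∣ p) :
    IsCyclic G := by
  by_contra hnc
  have hpow := pow_mem_of_forall_zpowers_pow_eq hH
  have hcenter := le_center_of_forall_zpowers_pow_eq hH hHtop
  have := normal_of_le_center hcenter
  have := Fact.mk hp
  obtain ⟨z, hz, hzc⟩ :=
    exists_notMem_mk_mem_center (isPGroup_quotient_of_forall_pow_mem hpow) hHtop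
  obtain ⟨a, ha⟩ : ∃ a, a ∉ zpowers z := by
    by_contra! h
    exact hnc ⟨z, h⟩
  obtain ⟨s, hs⟩ := mem_zpowers_iff.mp (hH z hz ▸ hpow a)
  set y := z ^ (-s)
  have hy : a ^ p * y ^ p = 1 := by
    rw [← hs, ← zpow_natCast, ← zpow_natCast, ← zpow_mul, ← zpow_mul, ← zpow_add,
      show (p : ℤ) * s + -s * p = 0 by ring, zpow_zero]
  have hc : ⁅a, y⁆ ∈ center G := hcenter (commutatorElement_mem_of_mk_mem_center a
    (by rw [QuotientGroup.mk_zpow]; exact zpow_mem hzc _))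
  have hcp : ⁅a, y⁆ ^ p = 1 := by
    rw [← commutatorElement_pow_right (mem_center_iff.mp hc y).symm,
      commutatorElement_eq_one_iff_commute]
    exact mem_center_iff.mp (hcenter (hpow y)) a
  obtain ⟨j, hj⟩ := mem_zpowers_iff.mp (mul_pow_mul_inv_mem_zpowers_commutatorElement hc p)
  rw [hy, inv_one, mul_one] at hj
  have hHz : H ≤ zpowers z := hH z hz ▸ zpowers_le.mpr (pow_mem (mem_zpowers z) p)
  have hay : a * y ∉ H := fun h => ha (by
    simpa [y] using mul_mem (hHz h) (zpow_mem (mem_zpowers z) s))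
  apply hHp
  rw [← hH _ hay, Nat.card_zpowers, ← hj]
  exact orderOf_dvd_of_pow_eq_one (by
    rw [← zpow_natCast, ← zpow_mul, mul_comm, zpow_mul, zpow_natCast, hcp, one_zpow])

theorem isCyclic_of_forall_notMem_generates {H : Subgroup G} (hHtop : H ≠ ⊤)
    (hH : ∀ g ∉ H, H ≤ zpowers g ∧ ∀ x ∈ zpowers g, x ∉ H → zpowers x = zpowers g)
    {x y : G} (hx : x ≠ 1) (hy : y ∈ H) (hxy : zpowers x < zpowers y) : IsCyclic G := by
  have hxy_dvd : orderOf x ∣ orderOf y := orderOf_dvd_of_mem_zpowers (zpowers_le.mp hxy.le)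
  have hxy_ne : orderOf x ≠ orderOf y := fun h =>
    hxy.ne (eq_of_le_of_card_ge hxy.le (by rw [Nat.card_zpowers, Nat.card_zpowers, h]))
  have hyH : orderOf y ∣ Nat.card H := Nat.card_zpowers y ▸ card_dvd_of_le (zpowers_le.mpr hy)
  have hx1 : orderOf x ≠ 1 := fun h => hx (orderOf_eq_one_iff.mp h)
  have hH1 : Nat.card H ≠ 1 := fun h => hx1 (Nat.dvd_one.mp (h ▸ hxy_dvd.trans hyH))
  have hp := Nat.minFac_prime hH1
  refine isCyclic_of_forall_zpowers_pow_eq hp (fun g hg => zpowers_pow_eq_of_forall_generates hp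
    (Nat.minFac_dvd _) hg (hH g hg).1 (hH g hg).2) hHtop fun hHp => ?_
  rcases hp.eq_one_or_self_of_dvd _ (hyH.trans hHp) with h | h
  · exact hx1 (Nat.dvd_one.mp (h ▸ hxy_dvd))
  · rcases hp.eq_one_or_self_of_dvd _ (h ▸ hxy_dvd) with h' | h'
    exacts [hx1 h', hxy_ne (h'.trans h.symm)]

theorem exists_le_maximal_zpowers (g : G) :
    ∃ u : G, g ∈ zpowers u ∧ Maximal (· ∈ Set.range zpowers) (zpowers u) := by
  obtain ⟨_, hle, hmax⟩ :=
    Finite.exists_le_maximal (p := (· ∈ Set.range (zpowers : G → Subgroup G))) ⟨g, rfl⟩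
  obtain ⟨u, rfl⟩ := hmax.prop
  exact ⟨u, zpowers_le.mp hle, hmax⟩

theorem exists_maximal_zpowers_of_not_isCyclic (hnc : ¬ IsCyclic G) :
    ∃ u v : G, Maximal (· ∈ Set.range zpowers) (zpowers u) ∧
      Maximal (· ∈ Set.range zpowers) (zpowers v) ∧ u ∉ zpowers v ∧ v ∉ zpowers u := by
  obtain ⟨u, -, hu⟩ := exists_le_maximal_zpowers (1 : G)
  obtain ⟨w, hw⟩ : ∃ w, w ∉ zpowers u := by
    by_contra! h
    exact hnc ⟨u, h⟩
  obtain ⟨v, hwv, hv⟩ := exists_le_maximal_zpowers w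
  refine ⟨u, v, hu, hv, fun huv => hw ?_, fun hvu => hw (zpowers_le.mpr hvu hwv)⟩
  rwa [hu.eq_of_le ⟨v, rfl⟩ (zpowers_le.mpr huv)]

end GroupTheory

section Cyclic

variable {G : Type*} [Group G] [Finite G] [IsCyclic G]

theorem IsCyclic.mem_zpowers_of_pow_orderOf_eq_one {x y : G} (h : x ^ orderOf y = 1) :
    x ∈ zpowers y := by
  classical
  have := Fintype.ofFinite G
  have hsub : (zpowers y : Set G) ⊆ {a | a ^ orderOf y = 1} := by
    intro a ha
    obtain ⟨n, rfl⟩ := mem_zpowers_iff.mp ha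
    rw [Set.mem_ofPred_eq, ← zpow_natCast, ← zpow_mul, mul_comm, zpow_mul, zpow_natCast,
      pow_orderOf_eq_one, one_zpow]
  have hcard : {a : G | a ^ orderOf y = 1}.ncard ≤ (zpowers y : Set G).ncard := by
    rw [Set.ncard_eq_toFinset_card', Set.toFinset_ofPred, ← Nat.card_coe_set_eq,
      SetLike.coe_sort_coe, Nat.card_zpowers]
    exact IsCyclic.card_pow_eq_one_le (orderOf_pos y)
  exact (Set.eq_of_subset_of_ncard_le hsub hcard (Set.toFinite _) ▸ h : x ∈ (zpowers y : Set G))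

theorem IsCyclic.zpowers_le_zpowers_iff {x y : G} :
    zpowers x ≤ zpowers y ↔ orderOf x ∣ orderOf y :=
  ⟨fun h => orderOf_dvd_of_mem_zpowers (zpowers_le.mp h), fun h =>
    zpowers_le.mpr (mem_zpowers_of_pow_orderOf_eq_one (orderOf_dvd_iff_pow_eq_one.mp h))⟩

theorem IsCyclic.zpowers_eq_zpowers_iff {x y : G} :
    zpowers x = zpowers y ↔ orderOf x = orderOf y := by
  rw [le_antisymm_iff, zpowers_le_zpowers_iff, zpowers_le_zpowers_iff]
  exact ⟨fun h => Nat.dvd_antisymm h.1 h.2, fun h => ⟨h.dvd, h.symm.dvd⟩⟩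

theorem IsCyclic.exists_orderOf_eq_of_dvd {d : ℕ} (hd : d ∣ Nat.card G) :
    ∃ x : G, orderOf x = d := by
  obtain ⟨g, hg⟩ := IsCyclic.exists_ofOrder_eq_natCard (α := G)
  exact ⟨g ^ (orderOf g / d), orderOf_pow_orderOf_div (hg ▸ Nat.card_pos.ne') (hg ▸ hd)⟩

theorem exists_vertex_orderOf_eq {d : ℕ} (hd : d ∣ Nat.card G) (hd1 : d ≠ 1) :
    ∃ x : {g : G // g ≠ 1}, orderOf x.1 = d := by
  obtain ⟨x, hx⟩ := IsCyclic.exists_orderOf_eq_of_dvd hd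
  exact ⟨⟨x, fun h => hd1 (hx ▸ h ▸ orderOf_one)⟩, hx⟩

theorem properRedPowGraph_adj_iff_of_isCyclic {x y : {g : G // g ≠ 1}} :
    (properRedPowGraph G).Adj x y ↔
      (orderOf x.1 ∣ orderOf y.1 ∨ orderOf y.1 ∣ orderOf x.1) ∧ orderOf x.1 ≠ orderOf y.1 := by
  change zpowers x.1 < zpowers y.1 ∨ zpowers y.1 < zpowers x.1 ↔ _
  simp only [lt_iff_le_and_ne, IsCyclic.zpowers_le_zpowers_iff, ne_eq,
    IsCyclic.zpowers_eq_zpowers_iff]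
  grind

theorem isCompleteKPartite_of_card_eq_prime_pow {p a : ℕ} (hp : p.Prime)
    (hcard : Nat.card G = p ^ a) : IsCompleteKPartite (properRedPowGraph G) a := by
  have hlevel : ∀ x : {g : G // g ≠ 1}, orderOf x.1 = p ^ (orderOf x.1).factorization p ∧
      1 ≤ (orderOf x.1).factorization p ∧ (orderOf x.1).factorization p ≤ a := by
    intro x
    obtain ⟨j, hja, hj⟩ := (Nat.dvd_prime_pow hp).mp (hcard ▸ orderOf_dvd_natCard x.1)
    have hj0 : j ≠ 0 := by
      rintro rfl
      exact x.2 (orderOf_eq_one_iff.mp hj)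
    simp only [hj, hp.factorization_pow, Finsupp.single_eq_same, true_and]
    omega
  refine ⟨fun x => ⟨(orderOf x.1).factorization p - 1, by grind⟩, fun i => ?_, fun x y => ?_⟩
  · obtain ⟨g, hg⟩ := exists_vertex_orderOf_eq (G := G) (d := p ^ (i.1 + 1))
      (by rw [hcard]; exact pow_dvd_pow p (by omega))
      (Nat.one_lt_pow i.1.succ_ne_zero hp.one_lt).ne'
    exact ⟨g, Fin.ext (by simp [hg, hp.factorization_pow])⟩
  · rw [properRedPowGraph_adj_iff_of_isCyclic, (hlevel x).1, (hlevel y).1,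
      Nat.pow_dvd_pow_iff_le_right hp.one_lt, Nat.pow_dvd_pow_iff_le_right hp.one_lt,
      (Nat.pow_right_injective hp.two_le).ne_iff]
    simp only [ne_eq, Fin.ext_iff]
    have := hlevel x
    have := hlevel y
    omega

section Partition

variable {α : Type*} {P : {g : G // g ≠ 1} → α}

theorem eq_of_not_dvd_of_not_dvd (hP : ∀ x y, (properRedPowGraph G).Adj x y ↔ P x ≠ P y)
    {x y : {g : G // g ≠ 1}} (hxy : ¬ orderOf x.1 ∣ orderOf y.1)
    (hyx : ¬ orderOf y.1 ∣ orderOf x.1) : P x = P y :=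
  not_not.mp fun h =>
    hxy ((properRedPowGraph_adj_iff_of_isCyclic.mp ((hP x y).mpr h)).1.resolve_right hyx)

theorem prime_dvd_orderOf_of_ne (hP : ∀ x y, (properRedPowGraph G).Adj x y ↔ P x ≠ P y)
    {x y : {g : G // g ≠ 1}} (hy : (orderOf y.1).Prime)
    (hxy : P x ≠ P y) : orderOf y.1 ∣ orderOf x.1 := by
  obtain ⟨h | h, hne⟩ := properRedPowGraph_adj_iff_of_isCyclic.mp ((hP x y).mpr hxy)
  · exact absurd ((hy.eq_one_or_self_of_dvd _ h).resolve_right hne)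
      (fun h1 => x.2 (orderOf_eq_one_iff.mp h1))
  · exact h

theorem eq_of_two_primes_dvd_orderOf (hP : ∀ x y, (properRedPowGraph G).Adj x y ↔ P x ≠ P y)
    {x xp xq : {g : G // g ≠ 1}} {p q : ℕ} (hp : p.Prime) (hq : q.Prime) (hpq : p ≠ q)
    (hxp : orderOf xp.1 = p) (hxq : orderOf xq.1 = q) (hPpq : P xp = P xq)
    (hpx : p ∣ orderOf x.1) (hqx : q ∣ orderOf x.1) (hGx : ¬ Nat.card G ∣ orderOf x.1) :
    P x = P xp := by
  have hprime_dvd : ∀ {r t j : ℕ}, r.Prime → t.Prime → t ∣ r ^ j → t = r :=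
    fun hr ht h => (Nat.prime_dvd_prime_iff_eq ht hr).mp (ht.dvd_of_dvd_pow h)
  obtain ⟨r, j, hr, hrG, hrx⟩ :
      ∃ r j : ℕ, r.Prime ∧ r ^ j ∣ Nat.card G ∧ ¬ r ^ j ∣ orderOf x.1 := by
    by_contra! hall
    exact hGx ((Nat.dvd_iff_prime_pow_dvd_dvd _ _).mpr hall)
  obtain ⟨e, he⟩ := exists_vertex_orderOf_eq hrG (fun h => hrx (h ▸ one_dvd _))
  obtain ⟨s, xs, hs, hxs, hsr, hPxs⟩ : ∃ (s : ℕ) (xs : {g : G // g ≠ 1}),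
      s.Prime ∧ orderOf xs.1 = s ∧ s ≠ r ∧ P xs = P xp := by
    by_cases hpr : p = r
    · exact ⟨q, xq, hq, hxq, fun h => hpq (hpr.trans h.symm), hPpq.symm⟩
    · exact ⟨p, xp, hp, hxp, hpr, rfl⟩
  have hPex : P e = P x := eq_of_not_dvd_of_not_dvd hP (he ▸ hrx) fun h => hpq <|
    (hprime_dvd hr hp (he ▸ hpx.trans h)).trans (hprime_dvd hr hq (he ▸ hqx.trans h)).symm
  have hPes : P e = P xs := by
    refine eq_of_not_dvd_of_not_dvd hP (fun h => hsr ?_)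
      fun h => hsr (hprime_dvd hr hs (hxs ▸ he ▸ h))
    rw [he, hxs] at h
    have := (hs.eq_one_or_self_of_dvd _ h).resolve_left (fun h1 => hrx (h1 ▸ one_dvd _))
    exact hprime_dvd hr hs ⟨1, by rw [mul_one, this]⟩
  exact hPex.symm.trans (hPes.trans hPxs)

end Partition

theorem eq_of_prime_dvd_card_of_isCompleteKPartite {k : ℕ} (hk : 3 ≤ k)
    (h : IsCompleteKPartite (properRedPowGraph G) k) {p q : ℕ} (hp : p.Prime) (hq : q.Prime)
    (hpG : p ∣ Nat.card G) (hqG : q ∣ Nat.card G) : p = q := by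
  obtain ⟨P, hPs, hP⟩ := h
  by_contra hpq
  obtain ⟨xp, hxp⟩ := exists_vertex_orderOf_eq hpG hp.ne_one
  obtain ⟨xq, hxq⟩ := exists_vertex_orderOf_eq hqG hq.ne_one
  obtain ⟨u, hu⟩ := exists_vertex_orderOf_eq (dvd_refl _)
    (fun h => hq.ne_one (Nat.dvd_one.mp (h ▸ hqG)))
  have hPpq : P xp = P xq := eq_of_not_dvd_of_not_dvd hP
    (by rw [hxp, hxq, Nat.prime_dvd_prime_iff_eq hp hq]; exact hpq)
    (by rw [hxp, hxq, Nat.prime_dvd_prime_iff_eq hq hp]; exact Ne.symm hpq)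
  have hPpu : P xp ≠ P u := by
    rw [← hP, properRedPowGraph_adj_iff_of_isCyclic, hxp, hu]
    exact ⟨Or.inl hpG, fun h => hpq ((Nat.prime_dvd_prime_iff_eq hq hp).mp (h ▸ hqG)).symm⟩
  obtain ⟨i, hip, hiu⟩ := Fin.exists_ne_and_ne_of_two_lt (P xp) (P u) hk
  obtain ⟨x, rfl⟩ := hPs i
  have hGx : ¬ Nat.card G ∣ orderOf x.1 := fun h =>
    (properRedPowGraph_adj_iff_of_isCyclic.mp ((hP x u).mpr hiu)).2
      (hu ▸ Nat.dvd_antisymm (orderOf_dvd_natCard _) h)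
  exact hip (eq_of_two_primes_dvd_orderOf hP hp hq hpq hxp hxq hPpq
    (hxp ▸ prime_dvd_orderOf_of_ne hP (hxp ▸ hp) hip)
    (hxq ▸ prime_dvd_orderOf_of_ne hP (hxq ▸ hq) (hPpq ▸ hip)) hGx)

theorem isPrimePow_card_of_isCompleteKPartite {k : ℕ} (hk : 3 ≤ k)
    (h : IsCompleteKPartite (properRedPowGraph G) k) : IsPrimePow (Nat.card G) := by
  obtain ⟨x, -⟩ := h.choose_spec.1 ⟨0, by omega⟩
  have hG : Nat.card G ≠ 1 := fun h1 =>
    x.2 (orderOf_eq_one_iff.mp (Nat.dvd_one.mp (h1 ▸ orderOf_dvd_natCard x.1)))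
  rw [isPrimePow_iff_unique_prime_dvd]
  exact ⟨_, ⟨Nat.minFac_prime hG, Nat.minFac_dvd _⟩, fun q hq =>
    eq_of_prime_dvd_card_of_isCompleteKPartite hk h hq.1 (Nat.minFac_prime hG) hq.2
      (Nat.minFac_dvd _)⟩

end Cyclic

section NonCyclic

variable {G : Type*} [Group G] {α : Type*} {P : {g : G // g ≠ 1} → α}

theorem mem_zpowers_of_adj_of_maximal {x u : {g : G // g ≠ 1}}
    (hu : Maximal (· ∈ Set.range zpowers) (zpowers u.1)) (h : (properRedPowGraph G).Adj x u) :
    x.1 ∈ zpowers u.1 :=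
  zpowers_le.mp (h.resolve_right (hu.not_gt ⟨x.1, rfl⟩)).le

theorem forall_notMem_generates_of_partition
    (hP : ∀ x y, (properRedPowGraph G).Adj x y ↔ P x ≠ P y) {A : α} {H : Subgroup G}
    (hH : ∀ x, P x ≠ A → x.1 ∈ H) {b : {g : G // g ≠ 1}} (hb : zpowers b.1 = H) (hPb : P b ≠ A) :
    ∀ g ∉ H, H ≤ zpowers g ∧ ∀ x ∈ zpowers g, x ∉ H → zpowers x = zpowers g := by
  have hPA : ∀ x : {g : G // g ≠ 1}, x.1 ∉ H → P x = A := fun x hx =>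
    not_not.mp fun h => hx (hH x h)
  intro g hg
  have hg1 : g ≠ 1 := fun h => hg (h ▸ H.one_mem)
  refine ⟨?_, fun x hx hxH => ?_⟩
  · rcases (hP ⟨g, hg1⟩ b).mpr (hPA ⟨g, hg1⟩ hg ▸ hPb.symm) with h | h
    · exact absurd (hb ▸ zpowers_le.mp h.le) hg
    · exact hb ▸ h.le
  · have hx1 : x ≠ 1 := fun h => hxH (h ▸ H.one_mem)
    by_contra hne
    exact (hP ⟨x, hx1⟩ ⟨g, hg1⟩).mp (Or.inl (lt_of_le_of_ne (zpowers_le.mpr hx) hne))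
      ((hPA _ hxH).trans (hPA _ hg).symm)

theorem isCyclic_of_isCompleteKPartite [Finite G] {k : ℕ} (hk : 3 ≤ k)
    (h : IsCompleteKPartite (properRedPowGraph G) k) : IsCyclic G := by
  by_contra hnc
  obtain ⟨P, hPs, hP⟩ := h
  obtain ⟨u, v, hu, hv, huv, hvu⟩ := exists_maximal_zpowers_of_not_isCyclic hnc
  set U : {g : G // g ≠ 1} := ⟨u, fun h => huv (h ▸ one_mem _)⟩
  set V : {g : G // g ≠ 1} := ⟨v, fun h => hvu (h ▸ one_mem _)⟩
  set H := zpowers u ⊓ zpowers v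
  have hPUV : P U = P V := not_not.mp fun h => ((hP U V).mpr h).elim
    (fun h => huv (zpowers_le.mp h.le)) (fun h => hvu (zpowers_le.mp h.le))
  have hH : ∀ x, P x ≠ P U → x.1 ∈ H := fun x hx =>
    ⟨mem_zpowers_of_adj_of_maximal hu ((hP x U).mpr hx),
      mem_zpowers_of_adj_of_maximal hv ((hP x V).mpr (hPUV ▸ hx))⟩
  obtain ⟨i, hi, -⟩ := Fin.exists_ne_and_ne_of_two_lt (P U) (P U) hk
  obtain ⟨j, hj, hji⟩ := Fin.exists_ne_and_ne_of_two_lt (P U) i hk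
  obtain ⟨x, rfl⟩ := hPs i
  obtain ⟨y, rfl⟩ := hPs j
  obtain ⟨b, hb⟩ := (le_zpowers_iff u H).mp inf_le_left
  have hHu : H < zpowers u := lt_of_le_of_ne inf_le_left fun h => huv (h ▸ mem_zpowers u).2
  have hb1 : u ^ b ≠ 1 := fun h1 => x.2 <| by
    simpa only [hb, h1, zpowers_one_eq_bot, mem_bot] using hH x hi
  have hPb : P ⟨u ^ b, hb1⟩ ≠ P U := (hP _ _).mp (Or.inl (hb ▸ hHu))
  have hgen := forall_notMem_generates_of_partition hP hH hb.symm hPb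
  have hHtop : H ≠ ⊤ := fun h => huv (h ▸ mem_top u).2
  rcases (hP x y).mpr hji.symm with hxy | hxy
  · exact hnc (isCyclic_of_forall_notMem_generates hHtop hgen x.2 (hH y hj) hxy)
  · exact hnc (isCyclic_of_forall_notMem_generates hHtop hgen y.2 (hH x hi) hxy)

end NonCyclic

/-- For k ≥ 3, RP*(G) is complete k-partite iff G ≅ ℤ_{p^k} for some prime p. -/
theorem stmt5 {G : Type*} [Group G] [Fintype G] (k : ℕ) (hk : 3 ≤ k) :
    IsCompleteKPartite (properRedPowGraph G) k ↔
      ∃ p : ℕ, p.Prime ∧ Nonempty (G ≃* Multiplicative (ZMod (p ^ k))) := by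
  constructor
  · intro h
    have := isCyclic_of_isCompleteKPartite hk h
    obtain ⟨p, a, hp, -, hcard⟩ := isPrimePow_card_of_isCompleteKPartite hk h
    have hp := Nat.prime_iff.mpr hp
    have hak := (isCompleteKPartite_of_card_eq_prime_pow (G := G) hp hcard.symm).unique h
    exact ⟨p, hp, ⟨hak ▸ hcard ▸ (zmodCyclicMulEquiv this).symm⟩⟩
  · rintro ⟨p, hp, ⟨e⟩⟩
    have := isCyclic_of_surjective e.symm e.symm.surjective
    exact isCompleteKPartite_of_card_eq_prime_pow hp
      ((Nat.card_congr e.toEquiv).trans (Nat.card_zmod _))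
end

section
/- For a prime p and n ≥ 1, the graph RP(ℤ_{p^n}) is Hamiltonian if and only if p = 2 and n ≥ 2. Moreover, RP*(ℤ_{p^n}) is never Hamiltonian. -/
open SimpleGraph

/-- A graph is Hamiltonian if it contains a cycle passing through every vertex exactly once. -/
def IsHamiltonian' {V : Type*} [DecidableEq V] (Γ : SimpleGraph V) : Prop :=
  ∃ (a : V) (c : Γ.Walk a a), c.IsHamiltonianCycle

/-!
The generators of a finite cyclic group are pairwise non-adjacent in the reduced power graph,
since each of them generates the whole group. A Hamiltonian cycle meets an independent set in at
most every other vertex, so a Hamiltonian graph has no independent set with more than half of its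
vertices. Now `ℤ_{p^n}` has `φ(p^n) = p^(n-1)(p-1)` generators: more than half of `p^n` when `p`
is odd, and always more than half of the `p^n - 1` non-identity elements. For `p = 2` the
generators are the odd residues, so `0, 1, …, 2^n - 1` alternates between non-generators and
generators, and a non-generator is adjacent to every generator: this is a Hamiltonian cycle as soon
as it has at least three vertices, i.e. `n ≥ 2`.
-/

open Finset

namespace SimpleGraph.Walk

lemma perm_dropLast_support_tail {V : Type*} {G : SimpleGraph V} {a : V} (p : G.Walk a a) :
    p.support.dropLast.Perm p.support.tail := by
  have h : p.support.dropLast ++ [a] = a :: p.support.tail := by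
    rw [dropLast_support_concat, cons_tail_support]
  exact (List.perm_cons a).mp <| (List.perm_append_singleton a _).symm.trans (h ▸ .refl _)

variable {V : Type*} [Fintype V] [DecidableEq V] {G : SimpleGraph V} {a : V}
  {p : G.Walk a a}

lemma IsHamiltonianCycle.coe_support_tail (hp : p.IsHamiltonianCycle) :
    (p.support.tail : Multiset V) = univ.val :=
  Multiset.ext.mpr fun v ↦ by
    rw [Multiset.coe_count, Multiset.count_univ, ← support_tail_of_not_nil p hp.not_nil]
    exact hp.isHamiltonian_tail v

/-- Every vertex is the tail of exactly one dart of the cycle and the head of exactly one, and a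
dart with head in `s` has its tail outside `s`. -/
lemma IsHamiltonianCycle.two_mul_card_le_of_isIndepSet (hp : p.IsHamiltonianCycle)
    {s : Finset V} (hs : G.IsIndepSet s) : 2 * #s ≤ Fintype.card V := by
  have countP_mem (l : List V) (hl : (l : Multiset V) = univ.val) : l.countP (· ∈ s) = #s := by
    rw [← Multiset.coe_countP, hl, Multiset.countP_eq_card_filter, ← Finset.filter_val,
      Finset.filter_mem_eq_inter, univ_inter, card_val]
  have hfst := countP_mem _ <| (Multiset.coe_eq_coe.mpr (perm_dropLast_support_tail p)).trans
    hp.coe_support_tail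
  have hsnd := countP_mem _ hp.coe_support_tail
  rw [← map_fst_darts, List.countP_map] at hfst
  rw [← map_snd_darts, List.countP_map] at hsnd
  have hsnd_le : p.darts.countP (fun d ↦ d.snd ∈ s) ≤ p.darts.countP (fun d ↦ !(d.fst ∈ s)) :=
    List.countP_mono_left fun d _ hd ↦ by
      simp only [decide_eq_true_eq, Bool.not_eq_true', decide_eq_false_iff_not] at hd ⊢
      exact fun hd' ↦ hs hd' hd d.adj.ne d.adj
  have hlen := p.darts.length_eq_countP_add_countP (fun d ↦ d.fst ∈ s)
  rw [length_darts, hp.length_eq] at hlen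
  simp only [Function.comp_def] at hfst hsnd
  simp only [decide_eq_true_eq, decide_not] at hlen
  omega

end SimpleGraph.Walk

open Function Subgroup Multiplicative Nat

section IsHamiltonian'

variable {V : Type*} [DecidableEq V] {Γ : SimpleGraph V}

lemma IsHamiltonian'.two_mul_card_le_of_isIndepSet [Fintype V] (hΓ : IsHamiltonian' Γ)
    {s : Finset V} (hs : Γ.IsIndepSet s) : 2 * #s ≤ Fintype.card V :=
  let ⟨_, _, hp⟩ := hΓ
  hp.two_mul_card_le_of_isIndepSet hs

lemma IsHamiltonian'.three_le_card [Fintype V] (hΓ : IsHamiltonian' Γ) : 3 ≤ Fintype.card V :=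
  let ⟨_, _, hp⟩ := hΓ
  hp.length_eq ▸ hp.three_le_length

lemma isHamiltonian'_of_bijective_cycleGraph_hom {k : ℕ} (f : cycleGraph (k + 3) →g Γ)
    (hf : Bijective f) : IsHamiltonian' Γ :=
  ⟨_, (cycleGraph.cycle k).map f, Walk.IsHamiltonianCycle.map hf <|
    Walk.isHamiltonianCycle_iff_isCycle_and_length_eq.mpr
      ⟨cycleGraph.isCycle_cycle, by rw [cycleGraph.length_cycle, Fintype.card_fin]⟩⟩

end IsHamiltonian'

section redPowGraph

variable {G : Type*} [Group G] {u v : G}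

lemma not_redPowGraph_adj_of_zpowers_eq_top (hu : zpowers u = ⊤) (hv : zpowers v = ⊤) :
    ¬ (redPowGraph G).Adj u v := by
  rintro (h | h) <;> simp [hu, hv] at h

lemma redPowGraph_adj_of_zpowers_eq_top_iff_ne_top (h : zpowers u = ⊤ ↔ zpowers v ≠ ⊤) :
    (redPowGraph G).Adj u v := by
  by_cases hu : zpowers u = ⊤
  · exact Or.inr (hu ▸ lt_top_iff_ne_top.mpr (h.mp hu))
  · exact Or.inl (not_not.mp (h.not.mp hu) ▸ lt_top_iff_ne_top.mpr hu)

variable [Fintype G]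

lemma isIndepSet_redPowGraph_setOf_orderOf_eq_card :
    (redPowGraph G).IsIndepSet {g | orderOf g = Fintype.card G} := by
  have hgen {g : G} (hg : orderOf g = Fintype.card G) : zpowers g = ⊤ :=
    eq_top_of_card_eq _ (by rw [Nat.card_zpowers, hg, Nat.card_eq_fintype_card])
  exact fun u hu v hv _ ↦ not_redPowGraph_adj_of_zpowers_eq_top (hgen hu) (hgen hv)

variable [DecidableEq G] [IsCyclic G]

theorem not_isHamiltonian'_redPowGraph (h : Fintype.card G < 2 * φ (Fintype.card G)) :
    ¬ IsHamiltonian' (redPowGraph G) := fun hG ↦ by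
  have := hG.two_mul_card_le_of_isIndepSet (s := {g | orderOf g = Fintype.card G})
    (by simpa using isIndepSet_redPowGraph_setOf_orderOf_eq_card)
  rw [IsCyclic.card_orderOf_eq_totient dvd_rfl] at this
  omega

theorem not_isHamiltonian'_properRedPowGraph (h : Fintype.card G ≤ 2 * φ (Fintype.card G)) :
    ¬ IsHamiltonian' (properRedPowGraph G) := fun hG ↦ by
  have hG1 : 1 < Fintype.card G :=
    let ⟨a, _⟩ := hG
    Fintype.one_lt_card_iff_nontrivial.mpr ⟨a, 1, a.2⟩
  let s := ({g | orderOf g = Fintype.card G} : Finset G).subtype (· ≠ 1)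
  have hs : (properRedPowGraph G).IsIndepSet s := fun u hu v hv huv ↦
    isIndepSet_redPowGraph_setOf_orderOf_eq_card (by simpa [s] using hu) (by simpa [s] using hv)
      (Subtype.val_injective.ne huv)
  have hcard : #s = φ (Fintype.card G) := by
    rw [card_subtype, filter_true_of_mem, IsCyclic.card_orderOf_eq_totient dvd_rfl]
    rintro g hg rfl
    simp [orderOf_one] at hg
    omega
  have := hG.two_mul_card_le_of_isIndepSet hs
  rw [hcard, Fintype.card_subtype_compl, Fintype.card_subtype_eq] at this
  omega

end redPowGraph

lemma ZMod.zpowers_ofAdd_eq_top_iff {m : ℕ} {x : ZMod m} : zpowers (ofAdd x) = ⊤ ↔ IsUnit x := by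
  constructor
  · intro h
    obtain ⟨k, hk⟩ := mem_zpowers_iff.mp (h ▸ mem_top (ofAdd (1 : ZMod m)))
    rw [← ofAdd_zsmul, ofAdd.injective.eq_iff, zsmul_eq_mul] at hk
    exact IsUnit.of_mul_eq_one_right _ hk
  · rintro ⟨u, rfl⟩
    refine (eq_top_iff' _).mpr fun z ↦ mem_zpowers_iff.mpr
      ⟨cast (toAdd z * ((u⁻¹ : (ZMod m)ˣ) : ZMod m)), ?_⟩
    rw [← ofAdd_zsmul, zsmul_eq_mul, intCast_zmod_cast, mul_assoc, Units.inv_mul, mul_one,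
      ofAdd_toAdd]

lemma ZMod.isUnit_iff_not_isUnit_add_one {n : ℕ} (hn : 0 < n) (x : ZMod (2 ^ n)) :
    IsUnit x ↔ ¬ IsUnit (x + 1) := by
  rw [← natCast_zmod_val x, ← Nat.cast_add_one, isUnit_natCast_iff_not_dvd_pow prime_two hn,
    isUnit_natCast_iff_not_dvd_pow prime_two hn]
  omega

theorem isHamiltonian'_redPowGraph_zmod {m : ℕ} (hm : 3 ≤ m)
    (h : ∀ x : ZMod m, IsUnit x ↔ ¬ IsUnit (x + 1)) :
    IsHamiltonian' (redPowGraph (Multiplicative (ZMod m))) := by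
  obtain ⟨k, rfl⟩ := Nat.exists_eq_add_of_le' hm
  have hadj (x : ZMod (k + 3)) : (redPowGraph _).Adj (ofAdd x) (ofAdd (x + 1)) :=
    redPowGraph_adj_of_zpowers_eq_top_iff_ne_top <| by
      rw [ZMod.zpowers_ofAdd_eq_top_iff, ne_eq, ZMod.zpowers_ofAdd_eq_top_iff]
      exact h x
  let e := ZMod.finEquiv (k + 3)
  refine isHamiltonian'_of_bijective_cycleGraph_hom ⟨fun i ↦ ofAdd (e i), fun {u v} huv ↦ ?_⟩
    (ofAdd.bijective.comp e.bijective)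
  rcases cycleGraph_adj.mp huv with huv | huv
  · have hu : e u = e v + 1 := by rw [← map_one e, ← map_add, ← huv, add_sub_cancel]
    exact hu ▸ (hadj _).symm
  · have hv : e v = e u + 1 := by rw [← map_one e, ← map_add, ← huv, add_sub_cancel]
    exact hv ▸ hadj _

lemma Nat.Prime.pow_le_two_mul_totient_pow {p : ℕ} (hp : p.Prime) (n : ℕ) :
    p ^ n ≤ 2 * φ (p ^ n) := by
  cases n with
  | zero => simp
  | succ n =>
    obtain ⟨q, rfl⟩ := Nat.exists_eq_add_of_le' hp.two_le
    rw [totient_prime_pow_succ hp, pow_succ, show q + 2 - 1 = q + 1 by omega]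
    nlinarith [Nat.zero_le ((q + 2) ^ n * q)]

lemma Nat.Prime.pow_lt_two_mul_totient_pow {p : ℕ} (hp : p.Prime) (hp2 : p ≠ 2) (n : ℕ) :
    p ^ n < 2 * φ (p ^ n) := by
  cases n with
  | zero => simp
  | succ n =>
    obtain ⟨q, rfl⟩ := Nat.exists_eq_add_of_le' hp.two_le
    rw [totient_prime_pow_succ hp, pow_succ, show q + 2 - 1 = q + 1 by omega]
    have : 0 < (q + 2) ^ n * q := Nat.mul_pos (by positivity) (by omega)
    nlinarith

theorem stmt18_general (p n : ℕ) (hp : p.Prime) :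
    (IsHamiltonian' (redPowGraph (Multiplicative (ZMod (p ^ n)))) ↔ (p = 2 ∧ 2 ≤ n)) ∧
    ¬ IsHamiltonian' (properRedPowGraph (Multiplicative (ZMod (p ^ n)))) := by
  have : NeZero p := ⟨hp.ne_zero⟩
  have hcard : Fintype.card (Multiplicative (ZMod (p ^ n))) = p ^ n := by simp
  refine ⟨⟨fun hG ↦ ?_, ?_⟩, not_isHamiltonian'_properRedPowGraph <| by
    simpa only [hcard] using hp.pow_le_two_mul_totient_pow n⟩
  · obtain rfl : p = 2 := by
      by_contra hp2
      exact not_isHamiltonian'_redPowGraph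
        (by simpa only [hcard] using hp.pow_lt_two_mul_totient_pow hp2 n) hG
    have h3 := hcard ▸ hG.three_le_card
    refine ⟨rfl, ?_⟩
    by_contra! hn
    interval_cases n <;> simp at h3
  · rintro ⟨rfl, hn⟩
    exact isHamiltonian'_redPowGraph_zmod
      (le_trans (by norm_num) (Nat.pow_le_pow_right two_pos hn))
      (ZMod.isUnit_iff_not_isUnit_add_one (by omega))

/-- RP(ℤ_{p^n}) is Hamiltonian iff p = 2 and n ≥ 2; RP*(ℤ_{p^n}) is never
Hamiltonian. -/
theorem stmt18 (p n : ℕ) (hp : p.Prime) (hn : 1 ≤ n) :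
    (IsHamiltonian' (redPowGraph (Multiplicative (ZMod (p ^ n)))) ↔ (p = 2 ∧ 2 ≤ n)) ∧
    ¬ IsHamiltonian' (properRedPowGraph (Multiplicative (ZMod (p ^ n)))) :=
  stmt18_general p n hp
end
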